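/- arXiv:2207.02571 — 4 statements merged into one kernel-verified Lean document; each statement's English description precedes it below -/
import Mathlib

section
/- A set Γ ⊆ [1,n] of positions of a string T of length n is a string attractor of T if and only if Γ ∩ cover(S) ≠ ∅ for every minimal substring S of T. (In particular, in the MAX-SAT encoding of the smallest string attractor problem it suffices to keep the hard clauses for minimal substrings only.) -/
/-!
If a proper factor `R` of `P = A ++ R ++ B` occurs no more often than `P`, then every
occurrence of `R` sits at offset `|A|` inside an occurrence of `P` (shifting by `|A|` maps
`occ P` injectively into `occ R`, hence onto it), so `cover R ⊆ cover P`. Descending along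
such factors from any nonempty substring therefore ends at a minimal substring whose cover
lies inside the cover of the one we started from.
-/

variable {α : Type*} [DecidableEq α]

/-- `occ T S`: the set of 1-based starting positions of occurrences of `S` in `T`,
i.e. `{ i ∈ [1, |T|-|S|+1] : T[i..i+|S|-1] = S }`. -/
def occ (T S : List α) : Finset ℕ :=
  (Finset.Icc 1 (T.length + 1 - S.length)).filter fun i =>
    (T.drop (i - 1)).take S.length = S

/-- `cover T S`: the set of 1-based text positions covered by some occurrence of `S` in `T`. -/
def cover (T S : List α) : Finset ℕ :=
  (occ T S).biUnion fun i => Finset.Icc i (i + S.length - 1)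

/-- `Γ ⊆ [1, |T|]` is a string attractor of `T`: every nonempty substring of `T`
has an occurrence covering a position of `Γ`. -/
def IsAttractor (T : List α) (Γ : Finset ℕ) : Prop :=
  Γ ⊆ Finset.Icc 1 T.length ∧
    ∀ P : List α, P ≠ [] → P <:+: T → (Γ ∩ cover T P).Nonempty

/-- `γ(T)`: the smallest size of a string attractor of `T`. -/
noncomputable def gammaSize (T : List α) : ℕ :=
  sInf {k | ∃ Γ : Finset ℕ, IsAttractor T Γ ∧ Γ.card = k}

/-- `S` is a minimal substring of `T`: a nonempty substring of `T` all of whose proper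
nonempty substrings occur strictly more often in `T` than `S` does. -/
def MinimalSubstring (T S : List α) : Prop :=
  S ≠ [] ∧ S <:+: T ∧
    ∀ R : List α, R ≠ [] → R <:+: S → R ≠ S → (occ T S).card < (occ T R).card

theorem mem_occ {T S : List α} {i : ℕ} :
    i ∈ occ T S ↔ (1 ≤ i ∧ i ≤ T.length + 1 - S.length) ∧ S <+: T.drop (i - 1) := by
  simp [occ, List.prefix_iff_eq_take, eq_comm]

theorem add_length_mem_occ_of_mem_occ_append {T A R B : List α} {i : ℕ}
    (hi : i ∈ occ T (A ++ R ++ B)) : i + A.length ∈ occ T R := by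
  obtain ⟨⟨hi₁, hi₂⟩, C, hC⟩ := mem_occ.mp hi
  simp only [List.length_append] at hi₂
  refine mem_occ.mpr ⟨⟨by omega, by omega⟩, B ++ C, ?_⟩
  rw [show i + A.length - 1 = i - 1 + A.length by omega, ← List.drop_drop, ← hC]
  simp

theorem image_occ_append_eq_occ {T A R B : List α}
    (hcard : (occ T R).card ≤ (occ T (A ++ R ++ B)).card) :
    (occ T (A ++ R ++ B)).image (· + A.length) = occ T R := by
  refine Finset.eq_of_subset_of_card_le ?_ ?_
  · simpa [Finset.image_subset_iff] using fun i hi => add_length_mem_occ_of_mem_occ_append hi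
  · rwa [Finset.card_image_of_injective _ (add_left_injective _)]

theorem cover_subset_cover_append {T A R B : List α}
    (hcard : (occ T R).card ≤ (occ T (A ++ R ++ B)).card) :
    cover T R ⊆ cover T (A ++ R ++ B) := by
  intro x hx
  simp only [cover, Finset.mem_biUnion, Finset.mem_Icc, ← image_occ_append_eq_occ hcard,
    Finset.mem_image] at hx ⊢
  obtain ⟨_, ⟨i, hi, rfl⟩, hx₁, hx₂⟩ := hx
  exact ⟨i, hi, by omega, by simp only [List.length_append]; omega⟩

theorem exists_minimalSubstring_cover_subset {T P : List α} (hP : P ≠ []) (hPT : P <:+: T) :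
    ∃ S, MinimalSubstring T S ∧ cover T S ⊆ cover T P := by
  by_cases hmin : ∀ R, R ≠ [] → R <:+: P → R ≠ P → (occ T P).card < (occ T R).card
  · exact ⟨P, ⟨hP, hPT, hmin⟩, subset_rfl⟩
  push Not at hmin
  obtain ⟨R, hR, ⟨A, B, rfl⟩, hRP, hcard⟩ := hmin
  have hRP' : R <:+: A ++ R ++ B := List.infix_append A R B
  have : R.length < (A ++ R ++ B).length :=
    hRP'.length_le.lt_of_ne fun h => hRP (hRP'.eq_of_length h)
  obtain ⟨S, hS, hSR⟩ := exists_minimalSubstring_cover_subset hR (hRP'.trans hPT)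
  exact ⟨S, hS, hSR.trans (cover_subset_cover_append hcard)⟩
termination_by P.length

/-- A set `Γ ⊆ [1, |T|]` is a string attractor of `T` if and only if it hits the cover of
every minimal substring of `T`. -/
theorem isAttractor_iff_forall_minimalSubstring (T : List α) (Γ : Finset ℕ)
    (hΓ : Γ ⊆ Finset.Icc 1 T.length) :
    IsAttractor T Γ ↔
      ∀ S : List α, MinimalSubstring T S → (Γ ∩ cover T S).Nonempty := by
  refine ⟨fun h S hS => h.2 S hS.1 hS.2.1, fun h => ⟨hΓ, fun P hP hPT => ?_⟩⟩
  obtain ⟨S, hS, hSP⟩ := exists_minimalSubstring_cover_subset hP hPT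
  exact (h S hS).mono (Finset.inter_subset_inter_left hSP)
end

section
/- Let d ≥ 2 and let T_d = S_1 S_2 ⋯ S_d be the string of length n = d² over the alphabet Σ = {a, $_1, $_2, …, $_d}, where S_i = a^{d-1} $_i (the character a repeated d−1 times followed by the symbol $_i). Then the set of minimal substrings of T_d is exactly { a^j : 1 ≤ j ≤ d−1 } ∪ { $_i : 1 ≤ i ≤ d }; in particular, the number m of minimal substrings of T_d equals 2d − 1 = 2√n − 1. -/
variable {α : Type*} [DecidableEq α]

section
set_option maxHeartbeats 1000000
set_option linter.unusedSectionVars false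

lemma blocks_length (d : ℕ) (hd : 1 ≤ d) (a : α) :
    ∀ (k : ℕ) (g : ℕ → α),
      ((List.ofFn fun i : Fin k => List.replicate (d - 1) a ++ [g i]).flatten).length = d * k := by
  intro k
  induction k with
  | zero => simp
  | succ k ih =>
    intro g
    rw [List.ofFn_succ, List.flatten_cons]
    simp only [List.length_append, List.length_replicate, List.length_singleton,
      Fin.val_succ]
    rw [ih (fun n => g (n + 1))]
    ring_nf
    omega

lemma blocks_getElem (d : ℕ) (hd : 1 ≤ d) (a : α) :
    ∀ (k : ℕ) (g : ℕ → α) (m : ℕ), m < d * k →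
      ((List.ofFn fun i : Fin k => List.replicate (d - 1) a ++ [g i]).flatten)[m]? =
        some (if m % d = d - 1 then g (m / d) else a) := by
  intro k
  induction k with
  | zero => intro g m hm; omega
  | succ k ih =>
    intro g m hm
    rw [List.ofFn_succ, List.flatten_cons]
    by_cases h : m < d
    · rw [List.getElem?_append_left (by simp; omega)]
      rw [Nat.mod_eq_of_lt h, Nat.div_eq_of_lt h]
      by_cases h2 : m = d - 1
      · rw [List.getElem?_append_right (by simp [h2])]
        simp [h2]
      · rw [List.getElem?_append_left (by simp; omega)]
        simp [h2, List.getElem?_replicate]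
        omega
    · push_neg at h
      obtain ⟨r, rfl⟩ := Nat.exists_eq_add_of_le h
      rw [List.getElem?_append_right (by simp; omega)]
      have hlen : (List.replicate (d - 1) a ++ [g ↑(0:Fin (k+1))]).length = d := by
        simp; omega
      rw [hlen]
      have : d + r - d = r := by omega
      rw [this]
      have hdk : d * (k + 1) = d * k + d := by ring
      have hr : r < d * k := by omega
      have := ih (fun n => g (n + 1)) r hr
      simp only [Fin.val_succ] at this ⊢
      rw [this]
      have h1 : (d + r) % d = r % d := Nat.add_mod_left d r
      have h2 : (d + r) / d = r / d + 1 := by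
        rw [Nat.add_comm, Nat.add_div_right _ (by omega)]
      rw [h1, h2]

lemma mem_occ_iff {T S : List α} {i : ℕ} :
    i ∈ occ T S ↔ 1 ≤ i ∧ i - 1 + S.length ≤ T.length ∧
      ∀ q < S.length, T[i - 1 + q]? = S[q]? := by
  unfold occ
  rw [Finset.mem_filter, Finset.mem_Icc]
  constructor
  · rintro ⟨⟨h1, h2⟩, h3⟩
    refine ⟨h1, by omega, fun q hq => ?_⟩
    conv_rhs => rw [← h3]
    rw [List.getElem?_take, if_pos hq, List.getElem?_drop]
  · rintro ⟨h1, h2, h3⟩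
    refine ⟨⟨h1, by omega⟩, ?_⟩
    apply List.ext_getElem?
    intro n
    by_cases hn : n < S.length
    · rw [List.getElem?_take, if_pos hn, List.getElem?_drop, h3 n hn]
    · rw [List.getElem?_eq_none (by rw [List.length_take]; omega),
        List.getElem?_eq_none (by omega)]

lemma occ_nonempty {T S : List α} (h : S <:+: T) : (occ T S).Nonempty := by
  obtain ⟨u, v, hT⟩ := h
  refine ⟨u.length + 1, ?_⟩
  have hlen : T.length = u.length + S.length + v.length := by rw [← hT]; simp; omega
  unfold occ
  rw [Finset.mem_filter, Finset.mem_Icc]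
  refine ⟨⟨by omega, by omega⟩, ?_⟩
  have h0 : u.length + 1 - 1 = u.length := by omega
  rw [h0, ← hT, List.append_assoc, List.drop_left, List.take_left]

lemma occ_prefix_subset {T R S : List α} (h : R <+: S) : occ T S ⊆ occ T R := by
  intro i hi
  rw [mem_occ_iff] at hi ⊢
  obtain ⟨h1, h2, h3⟩ := hi
  have hlen := h.length_le
  refine ⟨h1, by omega, fun q hq => ?_⟩
  rw [h3 q (by omega)]
  obtain ⟨t, rfl⟩ := h
  rw [List.getElem?_append_left hq]

end

set_option maxHeartbeats 1000000 in
/-- For `d ≥ 2`, the string `T_d = S_1 ⋯ S_d` of length `n = d²` with `S_i = a^{d-1} $_i`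
(over the alphabet `{a, $_1, …, $_d}` of pairwise distinct symbols) has as its minimal
substrings exactly the strings `a^j` for `1 ≤ j ≤ d-1` and `$_i` for `1 ≤ i ≤ d`;
in particular the number of minimal substrings is `2d - 1 = 2√n - 1`. -/
theorem minimalSubstrings_of_blocks (d : ℕ) (hd : 2 ≤ d)
    (a : α) (dollar : Fin d → α)
    (hinj : Function.Injective dollar) (hda : ∀ i, dollar i ≠ a)
    (T : List α)
    (hT : T = (List.ofFn fun i : Fin d => List.replicate (d - 1) a ++ [dollar i]).flatten) :
    T.length = d * d ∧
    (∀ S : List α, MinimalSubstring T S ↔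
      ((∃ j, 1 ≤ j ∧ j ≤ d - 1 ∧ S = List.replicate j a) ∨ (∃ i : Fin d, S = [dollar i]))) ∧
    {S : List α | MinimalSubstring T S}.ncard = 2 * d - 1 := by
  have hdpos : 0 < d := by omega
  have hdd : d ≤ d * d := Nat.le_mul_of_pos_left d hdpos
  set g : ℕ → α := fun j => if h : j < d then dollar ⟨j, h⟩ else a with hg
  have hfun : (fun i : Fin d => List.replicate (d - 1) a ++ [dollar i]) =
      (fun i : Fin d => List.replicate (d - 1) a ++ [g ↑i]) := by
    funext i
    simp [g, i.isLt]
  have hT' : T = (List.ofFn fun i : Fin d => List.replicate (d - 1) a ++ [g ↑i]).flatten := by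
    rw [hT, hfun]
  have hlenT : T.length = d * d := by
    rw [hT']; exact blocks_length d (by omega) a d g
  have hget : ∀ m < d * d, T[m]? = some (if m % d = d - 1 then g (m / d) else a) := by
    intro m hm
    rw [hT']; exact blocks_getElem d (by omega) a d g m hm
  have ha : ∀ m, m < d * d → m % d ≠ d - 1 → T[m]? = some a := by
    intro m hm h
    rw [hget m hm, if_neg h]
  have hdoll : ∀ i : Fin d, T[(i : ℕ) * d + (d - 1)]? = some (dollar i) := by
    intro i
    have h1 : (i : ℕ) + 1 ≤ d := i.isLt
    have h2 : ((i : ℕ) + 1) * d ≤ d * d := Nat.mul_le_mul_right d h1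
    have h3 : ((i : ℕ) + 1) * d = (i : ℕ) * d + d := by ring
    have hm : (i : ℕ) * d + (d - 1) < d * d := by omega
    rw [hget _ hm]
    have hmod : ((i : ℕ) * d + (d - 1)) % d = d - 1 := by
      rw [Nat.mul_comm (i : ℕ) d, Nat.mul_add_mod, Nat.mod_eq_of_lt (by omega)]
    have hdiv : ((i : ℕ) * d + (d - 1)) / d = (i : ℕ) := by
      rw [Nat.add_comm, Nat.add_mul_div_right _ _ hdpos, Nat.div_eq_of_lt (by omega)]
      omega
    rw [hmod, if_pos rfl, hdiv]
    simp [g, i.isLt]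
  have hchar : ∀ (m : ℕ) (x : α), T[m]? = some x →
      x = a ∨ ∃ i : Fin d, x = dollar i ∧ m = (i : ℕ) * d + (d - 1) := by
    intro m x hx
    have hm : m < d * d := by
      obtain ⟨h, -⟩ := List.getElem?_eq_some_iff.mp hx
      omega
    rw [hget m hm] at hx
    by_cases hmod : m % d = d - 1
    · right
      rw [if_pos hmod] at hx
      have hdiv : m / d < d := (Nat.div_lt_iff_lt_mul hdpos).mpr (by omega)
      have hgval : g (m / d) = dollar ⟨m / d, hdiv⟩ := by simp [g, hdiv]
      refine ⟨⟨m / d, hdiv⟩, ?_, ?_⟩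
      · rw [← Option.some_injective _ hx, hgval]
      · have hdm := Nat.div_add_mod m d
        have hcomm : d * (m / d) = (m / d) * d := Nat.mul_comm _ _
        simp only [Fin.val_mk]
        omega
    · left
      rw [if_neg hmod] at hx
      exact (Option.some_injective _ hx).symm
  have hd_unique : ∀ (m : ℕ) (i : Fin d), T[m]? = some (dollar i) →
      m = (i : ℕ) * d + (d - 1) := by
    intro m i hmx
    rcases hchar m _ hmx with h | ⟨i', hx, hm⟩
    · exact absurd h (hda i)
    · have : i = i' := hinj hx
      rw [this]; exact hm
  have ha_pos : ∀ m, T[m]? = some a → m < d * d ∧ m % d ≠ d - 1 := by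
    intro m hma
    have hm : m < d * d := by
      obtain ⟨h, -⟩ := List.getElem?_eq_some_iff.mp hma
      omega
    refine ⟨hm, fun hmod => ?_⟩
    rw [hget m hm, if_pos hmod] at hma
    have hdiv : m / d < d := (Nat.div_lt_iff_lt_mul hdpos).mpr (by omega)
    have hgval : g (m / d) = dollar ⟨m / d, hdiv⟩ := by simp [g, hdiv]
    rw [hgval] at hma
    exact hda _ (Option.some_injective _ hma)
  have hocc_dollar : ∀ i : Fin d, occ T [dollar i] ⊆ {(i : ℕ) * d + d} := by
    intro i p hp
    rw [mem_occ_iff] at hp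
    obtain ⟨h1, h2, h3⟩ := hp
    have h4 := h3 0 (by simp)
    have h4' : T[p - 1]? = some (dollar i) := by simpa using h4
    have h5 := hd_unique _ _ h4'
    rw [Finset.mem_singleton]
    omega
  have htake : ∀ j ≤ d - 1, List.replicate j a <+: T := by
    intro j hj
    rw [List.prefix_iff_eq_take]
    apply List.ext_getElem?
    intro n
    rw [List.getElem?_take, List.length_replicate, List.getElem?_replicate]
    by_cases hn : n < j
    · rw [if_pos hn, if_pos hn]
      rw [ha n (by omega) (by rw [Nat.mod_eq_of_lt (by omega)]; omega)]
    · rw [if_neg hn, if_neg hn]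
  -- the main characterization
  have hiff : ∀ S : List α, MinimalSubstring T S ↔
      ((∃ j, 1 ≤ j ∧ j ≤ d - 1 ∧ S = List.replicate j a) ∨ (∃ i : Fin d, S = [dollar i])) := by
    intro S
    constructor
    · rintro ⟨hSne, hSinf, hmin⟩
      by_cases hall : ∀ x ∈ S, x = a
      · left
        have hS : S = List.replicate S.length a := List.eq_replicate_of_mem hall
        have hSpos : 0 < S.length := List.length_pos_iff.mpr hSne
        refine ⟨S.length, by omega, ?_, hS⟩
        by_contra hlen
        push_neg at hlen
        obtain ⟨p, hp⟩ := occ_nonempty hSinf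
        rw [mem_occ_iff] at hp
        obtain ⟨h1, h2, h3⟩ := hp
        have hr : (p - 1) % d < d := Nat.mod_lt _ hdpos
        have hq : d - 1 - (p - 1) % d < S.length := by omega
        have h4 := h3 (d - 1 - (p - 1) % d) hq
        have hSq : S[d - 1 - (p - 1) % d]? = some a := by
          conv_lhs => rw [hS]
          rw [List.getElem?_replicate, if_pos hq]
        rw [hSq] at h4
        have hpos := ha_pos _ h4
        have hmod : (p - 1 + (d - 1 - (p - 1) % d)) % d = d - 1 := by
          have hdm := Nat.div_add_mod (p - 1) d
          have he : p - 1 + (d - 1 - (p - 1) % d) = d * ((p - 1) / d) + (d - 1) := by omega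
          rw [he, Nat.mul_add_mod, Nat.mod_eq_of_lt (by omega)]
        exact hpos.2 hmod
      · push_neg at hall
        obtain ⟨x, hxS, hxa⟩ := hall
        have hxT : x ∈ T := hSinf.subset hxS
        obtain ⟨m, hm⟩ := List.mem_iff_getElem?.mp hxT
        rcases hchar m x hm with h | ⟨i, hxi, -⟩
        · exact absurd h hxa
        subst hxi
        rcases Nat.lt_or_ge S.length 2 with hlen | hlen
        · right
          have h1 : S.length = 1 := by
            have := List.length_pos_iff.mpr hSne; omega
          obtain ⟨y, rfl⟩ := List.length_eq_one_iff.mp h1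
          simp only [List.mem_singleton] at hxS
          exact ⟨i, by rw [← hxS]⟩
        · exfalso
          have hRS : [dollar i] <:+: S := by
            obtain ⟨s, t, hst⟩ := List.append_of_mem hxS
            exact ⟨s, t, by rw [hst]; simp⟩
          have hne : [dollar i] ≠ S := by
            intro h; rw [← h] at hlen; simp at hlen
          have hlt := hmin [dollar i] (by simp) hRS hne
          have hcard : (occ T [dollar i]).card ≤ 1 := by
            have := Finset.card_le_card (hocc_dollar i)
            simpa using this
          have hne2 := Finset.card_pos.mpr (occ_nonempty hSinf)
          omega
    · rintro (⟨j, hj1, hj2, rfl⟩ | ⟨i, rfl⟩)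
      · refine ⟨?_, (htake j hj2).isInfix, ?_⟩
        · intro h
          have := congrArg List.length h
          simp at this
          omega
        · intro R hRne hRinf hRne2
          have hRall : ∀ x ∈ R, x = a := by
            intro x hx
            have := hRinf.subset hx
            rw [List.mem_replicate] at this
            exact this.2
          have hR : R = List.replicate R.length a := List.eq_replicate_of_mem hRall
          have hk1 : 1 ≤ R.length := List.length_pos_iff.mpr hRne
          have hkj : R.length ≤ j := by
            have := hRinf.length_le; simpa using this
          have hklt : R.length < j := by
            rcases Nat.lt_or_ge R.length j with h | h
            · exact h
            · exfalso
              have hkj' : R.length = j := by omega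
              rw [hkj'] at hR
              exact hRne2 hR
          rw [hR]
          set k := R.length with hk
          have hpre : List.replicate k a <+: List.replicate j a :=
            ⟨List.replicate (j - k) a, by rw [← List.replicate_add]; congr 1; omega⟩
          apply Finset.card_lt_card
          rw [Finset.ssubset_iff_of_subset (occ_prefix_subset hpre)]
          have hdd : d ≤ d * d := Nat.le_mul_of_pos_left d hdpos
          refine ⟨d - k, ?_, ?_⟩
          · rw [mem_occ_iff]
            refine ⟨by omega, ?_, ?_⟩
            · rw [List.length_replicate, hlenT]; omega
            · intro q hq
              rw [List.length_replicate] at hq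
              rw [List.getElem?_replicate, if_pos hq]
              apply ha
              · omega
              · rw [Nat.mod_eq_of_lt (by omega)]; omega
          · intro hmem
            rw [mem_occ_iff] at hmem
            obtain ⟨h1, h2, h3⟩ := hmem
            have h4 := h3 k (by rw [List.length_replicate]; omega)
            rw [List.getElem?_replicate, if_pos (by omega)] at h4
            simp only [show d - k - 1 + k = d - 1 from by omega] at h4
            obtain ⟨-, hne⟩ := ha_pos _ h4
            exact hne (Nat.mod_eq_of_lt (by omega))
      · refine ⟨by simp, ?_, ?_⟩
        · have hmem : dollar i ∈ T := List.mem_iff_getElem?.mpr ⟨_, hdoll i⟩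
          obtain ⟨s, t, hst⟩ := List.append_of_mem hmem
          exact ⟨s, t, by rw [hst]; simp⟩
        · intro R hRne hRinf hRne2
          exfalso
          have hsub := hRinf.sublist
          have hlen : R.length ≤ 1 := by simpa using hsub.length_le
          have hlen1 : R.length = 1 := by
            have := List.length_pos_iff.mpr hRne; omega
          exact hRne2 (hsub.eq_of_length (by simp [hlen1]))
  refine ⟨hlenT, hiff, ?_⟩
  have hinjrep : Function.Injective (fun j : ℕ => List.replicate j a) := by
    intro j k h
    simpa using congrArg List.length h
  have hinjdoll : Function.Injective (fun i : Fin d => [dollar i]) := by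
    intro i i' h
    exact hinj (by simpa using h)
  have hset : {S : List α | MinimalSubstring T S} =
      (fun j : ℕ => List.replicate j a) '' Set.Icc 1 (d - 1) ∪
        (fun i : Fin d => [dollar i]) '' Set.univ := by
    ext S
    rw [Set.mem_setOf_eq, hiff S]
    simp only [Set.mem_union, Set.mem_image, Set.mem_Icc, Set.mem_univ, true_and]
    constructor
    · rintro (⟨j, h1, h2, rfl⟩ | ⟨i, rfl⟩)
      · exact Or.inl ⟨j, ⟨h1, h2⟩, rfl⟩
      · exact Or.inr ⟨i, rfl⟩
    · rintro (⟨j, ⟨h1, h2⟩, rfl⟩ | ⟨i, rfl⟩)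
      · exact Or.inl ⟨j, h1, h2, rfl⟩
      · exact Or.inr ⟨i, rfl⟩
  have hdisj : Disjoint ((fun j : ℕ => List.replicate j a) '' Set.Icc 1 (d - 1))
      ((fun i : Fin d => [dollar i]) '' Set.univ) := by
    rw [Set.disjoint_left]
    rintro S ⟨j, ⟨hj1, hj2⟩, rfl⟩ ⟨i, -, hcontra⟩
    have hl := congrArg List.length hcontra
    simp at hl
    rw [← hl] at hcontra
    simp [List.replicate] at hcontra
    exact hda i hcontra
  rw [hset, Set.ncard_union_eq hdisj ((Set.finite_Icc 1 (d - 1)).image _)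
      (Set.finite_univ.image _),
    Set.ncard_image_of_injective _ hinjrep, Set.ncard_image_of_injective _ hinjdoll]
  have h1 : (Set.Icc 1 (d - 1)).ncard = d - 1 := by
    rw [← Finset.coe_Icc, Set.ncard_coe_finset, Nat.card_Icc]
    omega
  rw [h1, Set.ncard_univ, Nat.card_eq_fintype_card, Fintype.card_fin]
  omega
end

section
/- (Lemma 2, backward direction) Let T be a string over an alphabet with σ distinct symbols occurring in T, and let T = F_1 ⋯ F_m be a factorization of T such that: (i) for each factor F_k with |F_k| > 1 there exist indices i_k < j_k < k with F_k = F_{i_k} ⋯ F_{j_k}; and (ii) for any two factors F_x, F_y of length greater than 1, the associated index intervals [i_x..j_x] and [i_y..j_y] are either disjoint or one is contained in the other. Then there exists a straight-line program G of size m + σ − 1 producing T whose grammar parsing is exactly F_1 ⋯ F_m. -/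
/-- A straight-line program: a grammar in Chomsky normal form with nonterminals `0, …, g-1`,
a start symbol, and exactly one production per nonterminal, either `X → c` (a terminal) or
`X → Y Z` with `Y, Z` strictly smaller nonterminals (which makes the grammar acyclic, so that
each nonterminal derives a unique string). -/
structure SLP (α : Type*) where
  /-- the number of nonterminals (= number of productions = size of the SLP) -/
  g : ℕ
  /-- the start symbol -/
  start : Fin g
  /-- the unique production of each nonterminal -/
  rule : Fin g → α ⊕ (Fin g × Fin g)
  /-- binary rules refer to strictly smaller nonterminals -/
  wf : ∀ i j k, rule i = Sum.inr (j, k) → j < i ∧ k < i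

namespace SLP

variable {α : Type*}

/-- The string derived from nonterminal `i`. -/
def expand (G : SLP α) (i : Fin G.g) : List α :=
  match h : G.rule i with
  | Sum.inl c => [c]
  | Sum.inr (j, k) => G.expand j ++ G.expand k
termination_by i.val
decreasing_by
  · exact (G.wf i j k h).1
  · exact (G.wf i j k h).2

/-- `G` produces the string `T`. -/
def Produces (G : SLP α) (T : List α) : Prop := G.expand G.start = T

/-- The size of an SLP: its number of productions. -/
def size (G : SLP α) : ℕ := G.g

/-- Pre-order traversal of the parse tree computing the leaves of the *partial parse tree*:
a node labeled by a nonterminal with a binary rule is internal only at its leftmost (first in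
pre-order) occurrence; all later occurrences become leaves. `seen` is the set of binary
nonterminals already expanded to the left; the function returns the factors contributed by the
subtree rooted at `i` together with the updated set. -/
def visit (G : SLP α) (i : Fin G.g) (seen : Finset (Fin G.g)) :
    List (List α) × Finset (Fin G.g) :=
  match h : G.rule i with
  | Sum.inl _ => ([G.expand i], seen)
  | Sum.inr (j, k) =>
    if i ∈ seen then ([G.expand i], seen)
    else
      let r₁ := G.visit j (insert i seen)
      let r₂ := G.visit k r₁.2
      (r₁.1 ++ r₂.1, r₂.2)
termination_by i.val
decreasing_by
  · exact (G.wf i j k h).1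
  · exact (G.wf i j k h).2

/-- The grammar parsing of the produced string with respect to `G`: the factorization given by
the leaves of the partial parse tree, read left to right. -/
def grammarParsing (G : SLP α) : List (List α) := (G.visit G.start ∅).1

/-- Nonterminal `i` is used, i.e., reachable from the start symbol. -/
inductive Reachable (G : SLP α) : Fin G.g → Prop
  | start : G.Reachable G.start
  | left {i j k} : G.Reachable i → G.rule i = Sum.inr (j, k) → G.Reachable j
  | right {i j k} : G.Reachable i → G.rule i = Sum.inr (j, k) → G.Reachable k

end SLP

variable {α : Type*} [DecidableEq α]

/-! Refine the laminar family of reference intervals `[I k, J k]` to a full binary tree on the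
factors in which every reference interval is the span of a node; its `m - 1` internal nodes
correspond to the split points between consecutive factors. The grammar has a terminal rule for
each letter and a binary rule for each internal node. A leaf of the tree is either a one-letter
factor, i.e. a terminal, or a long factor `k`, which is the nonterminal of the node spanning
`[I k, J k]`. Since `J k < k`, that node has already been expanded when the pre-order traversal
reaches leaf `k`, so the partial parse tree stops exactly at the factors. Numbering the internal
nodes in post-order makes every right-hand side refer to smaller nonterminals. -/

open Finset

namespace SLP

variable {β : Type*} (G : SLP β)

theorem expand_of_rule_inl {i : Fin G.g} {c : β} (h : G.rule i = .inl c) : G.expand i = [c] := by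
  rw [expand]; split <;> simp_all

theorem expand_of_rule_inr {i j k : Fin G.g} (h : G.rule i = .inr (j, k)) :
    G.expand i = G.expand j ++ G.expand k := by
  rw [expand]; split <;> simp_all

theorem expand_eq_of_rule (w : Fin G.g → List β)
    (hl : ∀ i c, G.rule i = .inl c → w i = [c])
    (hr : ∀ i j k, G.rule i = .inr (j, k) → w i = w j ++ w k) (i : Fin G.g) :
    G.expand i = w i := by
  induction i using (measure Fin.val).wf.induction with
  | h i ih =>
    rcases h : G.rule i with c | ⟨j, k⟩
    · rw [G.expand_of_rule_inl h, hl i c h]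
    · have hjk := G.wf i j k h
      rw [G.expand_of_rule_inr h, hr i j k h, ih j hjk.1, ih k hjk.2]

theorem visit_of_rule_inl {i : Fin G.g} {c : β} (h : G.rule i = .inl c) (seen : Finset (Fin G.g)) :
    G.visit i seen = ([G.expand i], seen) := by
  rw [visit]; split <;> simp_all

theorem visit_of_mem {i j k : Fin G.g} (h : G.rule i = .inr (j, k)) {seen : Finset (Fin G.g)}
    (hi : i ∈ seen) : G.visit i seen = ([G.expand i], seen) := by
  rw [visit]; split <;> simp_all

theorem visit_of_notMem {i j k : Fin G.g} (h : G.rule i = .inr (j, k)) {seen : Finset (Fin G.g)}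
    (hi : i ∉ seen) :
    G.visit i seen =
      let r₁ := G.visit j (insert i seen)
      let r₂ := G.visit k r₁.2
      (r₁.1 ++ r₂.1, r₂.2) := by
  rw [visit]; split <;> simp_all

end SLP

namespace List

variable {β : Type*}

def slice (l : List β) (x y : ℕ) : List β := (l.take (y + 1)).drop x

theorem slice_self (l : List β) (d : β) {x : ℕ} (hx : x < l.length) : l.slice x x = [l.getD x d] := by
  rw [slice, drop_take, Nat.add_sub_cancel_left, take_one, head?_drop, getD_eq_getElem _ _ hx,
    getElem?_eq_getElem hx]
  rfl

theorem slice_append_slice (l : List β) {x s y : ℕ} (hxs : x < s) (hsy : s ≤ y + 1) :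
    l.slice x (s - 1) ++ l.slice s y = l.slice x y := by
  have hs : l.take (s - 1 + 1) = (l.take (y + 1)).take s := by
    rw [take_take, min_eq_left hsy, Nat.sub_add_cancel (by omega)]
  rw [slice, slice, slice, hs, drop_take]
  conv_rhs => rw [← drop_take_append_drop _ x (s - x), Nat.add_sub_cancel' hxs.le]

theorem slice_zero_length_sub_one (l : List β) : l.slice 0 (l.length - 1) = l :=
  take_of_length_le (by omega)

end List

section Rank
variable {ι β : Type*} [LinearOrder β] (S : Finset ι) (f : ι → β)

def rank (x : ι) : ℕ := #{y ∈ S | f y < f x}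

variable {S f}

theorem rank_lt_rank {x y : ι} (hx : x ∈ S) (h : f x < f y) : rank S f x < rank S f y :=
  card_lt_card <| (ssubset_iff_of_subset fun z hz => by
    simp only [mem_filter] at hz ⊢; exact ⟨hz.1, hz.2.trans h⟩).2 ⟨x, by simp [hx, h]⟩

theorem rank_lt_card {x : ι} (hx : x ∈ S) : rank S f x < #S :=
  card_lt_card <| filter_ssubset.2 ⟨x, hx, lt_irrefl _⟩

theorem rank_injOn (hf : Set.InjOn f S) : Set.InjOn (rank S f) S := by
  intro x hx y hy hxy
  rcases lt_trichotomy (f x) (f y) with h | h | h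
  · exact absurd hxy (rank_lt_rank hx h).ne
  · exact hf hx hy h
  · exact absurd hxy (rank_lt_rank hy h).ne'

theorem rank_bijOn (hf : Set.InjOn f S) : Set.BijOn (rank S f) S (Set.Iio #S) := by
  refine ⟨fun x hx => rank_lt_card hx, rank_injOn hf, ?_⟩
  have : (S.image (rank S f)) = range #S := by
    refine eq_of_subset_of_card_le (fun i hi => ?_) ?_
    · obtain ⟨x, hx, rfl⟩ := mem_image.1 hi
      exact mem_range.2 (rank_lt_card hx)
    · rw [card_range, card_image_of_injOn (rank_injOn hf)]
  intro i hi
  obtain ⟨x, hx, rfl⟩ := mem_image.1 (this ▸ mem_range.2 hi)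
  exact ⟨x, hx, rfl⟩

end Rank

structure IsLaminar (R : Finset (ℕ × ℕ)) (n : ℕ) : Prop where
  fst_lt_snd : ∀ p ∈ R, p.1 < p.2
  snd_le : ∀ p ∈ R, p.2 ≤ n
  not_crossing : ∀ p ∈ R, ∀ q ∈ R, p.1 < q.1 → q.1 ≤ p.2 → q.2 ≤ p.2

/- The binary tree refining `R` on the leaves `0, …, n` is encoded by its split points: internal
node `s ∈ [1, n]` has left subtree on `[spanStart R s, s - 1]` and right subtree on
`[s, spanEnd R s]`. Here `spanStart R s` is the left end of the innermost interval of `R ∪ {[0, n]}`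
straddling `s - 1, s`, and `spanEnd R s` the right end of the longest interval of `R` starting at
`s`; so the maximal blocks inside an interval are combined from left to right, and the node
spanning `[x, y]` is `topSplit R x y`, the start of the last block. -/
namespace SplitTree

variable (R : Finset (ℕ × ℕ))

def spanStart (s : ℕ) : ℕ := {p ∈ R | p.1 < s ∧ s ≤ p.2}.sup Prod.fst

def spanEnd (s : ℕ) : ℕ := s ⊔ {p ∈ R | p.1 = s}.sup Prod.snd

def topSplit (x y : ℕ) : ℕ :=
  (insert y ({p ∈ R | x < p.1 ∧ p.2 = y}.image Prod.fst)).min' (insert_nonempty _ _)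

variable {R} {n s x y : ℕ}

theorem le_spanStart {p : ℕ × ℕ} (hp : p ∈ R) (h₁ : p.1 < s) (h₂ : s ≤ p.2) :
    p.1 ≤ spanStart R s :=
  le_sup (f := Prod.fst) (mem_filter.2 ⟨hp, h₁, h₂⟩)

theorem spanStart_lt (hs : 0 < s) : spanStart R s < s :=
  (Finset.sup_lt_iff hs).2 fun _ hp => (mem_filter.1 hp).2.1

theorem spanStart_eq_zero_or_exists (s : ℕ) :
    spanStart R s = 0 ∨ ∃ p ∈ R, p.1 = spanStart R s ∧ p.1 < s ∧ s ≤ p.2 := by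
  rcases {p ∈ R | p.1 < s ∧ s ≤ p.2}.eq_empty_or_nonempty with h | h
  · left; simp [spanStart, h]
  · obtain ⟨p, hp, he⟩ := exists_mem_eq_sup _ h Prod.fst
    obtain ⟨hpR, h₁, h₂⟩ := mem_filter.1 hp
    exact .inr ⟨p, hpR, he.symm, h₁, h₂⟩

theorem self_le_spanEnd (s : ℕ) : s ≤ spanEnd R s := le_sup_left

theorem le_spanEnd (h : (s, y) ∈ R) : y ≤ spanEnd R s :=
  le_sup_of_le_right (le_sup (f := Prod.snd) (s := {p ∈ R | p.1 = s}) (mem_filter.2 ⟨h, rfl⟩))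

theorem spanEnd_eq_self_or_mem (s : ℕ) : spanEnd R s = s ∨ (s, spanEnd R s) ∈ R := by
  rcases {p ∈ R | p.1 = s}.eq_empty_or_nonempty with h | h
  · left; simp [spanEnd, h]
  · obtain ⟨p, hp, he⟩ := exists_mem_eq_sup _ h Prod.snd
    obtain ⟨hpR, rfl⟩ := mem_filter.1 hp
    have hmax : spanEnd R p.1 = max p.1 p.2 := by rw [spanEnd, he]
    rcases max_choice p.1 p.2 with h' | h'
    · exact .inl (hmax.trans h')
    · exact .inr (by rwa [hmax, h'])

theorem spanEnd_le (hR : IsLaminar R n) (hs : s ≤ n) : spanEnd R s ≤ n :=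
  sup_le hs (Finset.sup_le fun p hp => hR.snd_le p (mem_filter.1 hp).1)

theorem topSplit_le (x y : ℕ) : topSplit R x y ≤ y := min'_le _ _ (mem_insert_self _ _)

theorem topSplit_le_of_mem {x' : ℕ} (h : x < x') (h' : (x', y) ∈ R) : topSplit R x y ≤ x' :=
  min'_le _ _ (mem_insert_of_mem (mem_image.2 ⟨(x', y), mem_filter.2 ⟨h', h, rfl⟩, rfl⟩))

theorem topSplit_eq_or_mem (x y : ℕ) :
    topSplit R x y = y ∨ x < topSplit R x y ∧ (topSplit R x y, y) ∈ R := by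
  have h := min'_mem (insert y ({p ∈ R | x < p.1 ∧ p.2 = y}.image Prod.fst)) (insert_nonempty _ _)
  rw [mem_insert, mem_image] at h
  rcases h with h | ⟨p, hp, he⟩
  · exact .inl h
  · obtain ⟨hpR, h₁, h₂⟩ := mem_filter.1 hp
    right
    rw [topSplit, ← he]
    exact ⟨h₁, by simpa [← h₂] using hpR⟩

theorem span_topSplit (hR : IsLaminar R n) (hxy : x < y)
    (henc : ∀ t, x < t → t ≤ y → x ≤ spanStart R t)
    (hcross : ∀ p ∈ R, x < p.1 → p.1 ≤ y → p.2 ≤ y) :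
    spanStart R (topSplit R x y) = x ∧ spanEnd R (topSplit R x y) = y := by
  have hmin : ∀ x', x < x' → (x', y) ∈ R → topSplit R x y ≤ x' := fun _ => topSplit_le_of_mem
  have htop := topSplit_eq_or_mem (R := R) x y
  have hty := topSplit_le (R := R) x y
  generalize topSplit R x y = t at *
  have hxt : x < t := by omega
  have hnest : ∀ p ∈ R, p.1 < t → t ≤ p.2 → p.1 ≤ x := by
    intro p hp h₁ h₂
    by_contra hxp
    have hpy := hcross p hp (by omega) (by omega)
    rcases hpy.eq_or_lt with h | h
    · exact absurd (hmin p.1 (by omega) (h ▸ hp)) (by omega)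
    · rcases htop with rfl | ⟨-, htR⟩
      · omega
      · exact absurd (hR.not_crossing p hp _ htR h₁ h₂) (by simp only; omega)
  refine ⟨le_antisymm ?_ (henc t hxt hty), ?_⟩
  · rcases spanStart_eq_zero_or_exists (R := R) t with h | ⟨p, hp, he, h₁, h₂⟩
    · omega
    · exact he ▸ hnest p hp h₁ h₂
  · have hyt : y ≤ spanEnd R t := by
      rcases htop with rfl | ⟨-, htR⟩
      exacts [self_le_spanEnd _, le_spanEnd htR]
    rcases spanEnd_eq_self_or_mem (R := R) t with h | h
    · omega
    · exact le_antisymm (hcross _ h hxt hty) hyt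

theorem span_topSplit_of_mem (hR : IsLaminar R n) (h : (x, y) ∈ R) :
    spanStart R (topSplit R x y) = x ∧ spanEnd R (topSplit R x y) = y :=
  span_topSplit hR (hR.fst_lt_snd _ h) (fun _ h₁ h₂ => le_spanStart h h₁ h₂)
    (fun p hp h₁ h₂ => hR.not_crossing _ h p hp h₁ h₂)

theorem span_topSplit_left (hR : IsLaminar R n) (h : spanStart R s < s - 1) :
    spanStart R (topSplit R (spanStart R s) (s - 1)) = spanStart R s ∧
      spanEnd R (topSplit R (spanStart R s) (s - 1)) = s - 1 := by
  refine span_topSplit hR h (fun t h₁ h₂ => ?_) (fun p hp h₁ h₂ => ?_)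
  · rcases spanStart_eq_zero_or_exists (R := R) s with h0 | ⟨p, hp, he, hp₁, hp₂⟩
    · simp [h0]
    · exact he ▸ le_spanStart hp (by omega) (by omega)
  · by_contra hp₂
    have := le_spanStart (s := s) hp (by omega) (by omega)
    omega

theorem eq_of_nested_of_straddles {s' : ℕ} (hs' : 0 < s')
    (h₁ : spanStart R s ≤ spanStart R s') (h₂ : spanEnd R s' ≤ spanEnd R s)
    (h₃ : spanStart R s' < s) (h₄ : s ≤ spanEnd R s') : s' = s := by
  have ha' := spanStart_lt (R := R) hs'
  rcases lt_trichotomy s' s with h | h | h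
  · rcases spanEnd_eq_self_or_mem (R := R) s' with he | he
    · omega
    · have := le_spanStart he h h₄
      omega
  · exact h
  · have := self_le_spanEnd (R := R) s'
    rcases spanEnd_eq_self_or_mem (R := R) s with he | he
    · omega
    · have := le_spanStart he h (by omega)
      omega

theorem snd_lt_of_fst_lt (hR : IsLaminar R n) {p : ℕ × ℕ} {t k : ℕ} (hp : p ∈ R)
    (h₁ : p.1 < t) (htk : t ≤ k) (hk : k ≤ spanEnd R t) (h₂ : p.2 < k) : p.2 < t := by
  by_contra hle
  rcases spanEnd_eq_self_or_mem (R := R) t with he | he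
  · omega
  · have := hR.not_crossing p hp _ he h₁ (by simp only; omega)
    simp only at this
    omega

variable (R) in
def IsBlock (n x y : ℕ) : Prop :=
  y ≤ n ∧ (x = y ∨ x < y ∧ spanStart R (topSplit R x y) = x ∧ spanEnd R (topSplit R x y) = y)

theorem IsBlock.le (h : IsBlock R n x y) : x ≤ y ∧ y ≤ n := by
  rcases h with ⟨hy, rfl | ⟨hxy, -⟩⟩ <;> omega

theorem IsBlock.node (h : IsBlock R n x y) (hxy : x ≠ y) :
    topSplit R x y ∈ Icc 1 n ∧ spanStart R (topSplit R x y) = x ∧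
      spanEnd R (topSplit R x y) = y := by
  obtain ⟨hy, h | ⟨hxy', hx, hy'⟩⟩ := h
  · exact absurd h hxy
  refine ⟨mem_Icc.2 ⟨?_, (topSplit_le x y).trans hy⟩, hx, hy'⟩
  rcases topSplit_eq_or_mem (R := R) x y with h | h <;> omega

theorem isBlock_of_mem (hR : IsLaminar R n) (h : (x, y) ∈ R) : IsBlock R n x y :=
  ⟨hR.snd_le _ h, .inr ⟨hR.fst_lt_snd _ h, span_topSplit_of_mem hR h⟩⟩

theorem isBlock_left (hR : IsLaminar R n) (hs : s ∈ Icc 1 n) :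
    IsBlock R n (spanStart R s) (s - 1) := by
  have hs' := mem_Icc.1 hs
  have := spanStart_lt (R := R) hs'.1
  refine ⟨by omega, ?_⟩
  rcases (Nat.le_sub_one_of_lt this).eq_or_lt with h | h
  exacts [.inl h, .inr ⟨h, span_topSplit_left hR h⟩]

theorem isBlock_right (hR : IsLaminar R n) (hs : s ≤ n) : IsBlock R n s (spanEnd R s) := by
  refine ⟨spanEnd_le hR hs, ?_⟩
  rcases spanEnd_eq_self_or_mem (R := R) s with h | h
  exacts [.inl h.symm, .inr ⟨hR.fst_lt_snd _ h, span_topSplit_of_mem hR h⟩]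

theorem isBlock_root (hR : IsLaminar R n) : IsBlock R n 0 n := by
  refine ⟨le_rfl, ?_⟩
  rcases Nat.eq_zero_or_pos n with h | h
  · exact .inl h.symm
  · exact .inr ⟨h, span_topSplit hR h (fun _ _ _ => Nat.zero_le _) fun p hp _ _ => hR.snd_le p hp⟩

variable (R) in
def nodesWithin (n x y : ℕ) : Finset ℕ := {t ∈ Icc 1 n | x ≤ spanStart R t ∧ spanEnd R t ≤ y}

theorem nodesWithin_self : nodesWithin R n x x = ∅ := by
  refine filter_eq_empty_iff.2 fun t ht h => ?_
  have := spanStart_lt (R := R) (mem_Icc.1 ht).1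
  have := self_le_spanEnd (R := R) t
  omega

theorem nodesWithin_eq_insert_union {t : ℕ} (ht : t ∈ Icc 1 n) :
    nodesWithin R n (spanStart R t) (spanEnd R t) =
      insert t (nodesWithin R n (spanStart R t) (t - 1) ∪ nodesWithin R n t (spanEnd R t)) := by
  have ht₀ : 0 < t := (mem_Icc.1 ht).1
  ext u
  simp only [nodesWithin, mem_insert, mem_union, mem_filter]
  constructor
  · rintro ⟨hu, h₁, h₂⟩
    have hu₀ : 0 < u := (mem_Icc.1 hu).1
    by_cases hst : spanStart R u < t ∧ t ≤ spanEnd R u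
    · exact .inl (eq_of_nested_of_straddles hu₀ h₁ h₂ hst.1 hst.2)
    · have := spanStart_lt (R := R) hu₀
      have := self_le_spanEnd (R := R) u
      right
      by_cases hut : spanStart R u < t
      · exact .inl ⟨hu, h₁, by omega⟩
      · exact .inr ⟨hu, by omega, h₂⟩
  · have := spanStart_lt (R := R) ht₀
    have := self_le_spanEnd (R := R) t
    rintro (rfl | ⟨hu, h₁, h₂⟩ | ⟨hu, h₁, h₂⟩)
    · exact ⟨ht, le_rfl, le_rfl⟩
    · exact ⟨hu, h₁, by omega⟩
    · exact ⟨hu, by omega, h₂⟩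

theorem disjoint_nodesWithin {x' y' : ℕ} (h : y < x') :
    Disjoint (nodesWithin R n x y) (nodesWithin R n x' y') := by
  refine disjoint_left.2 fun u hu hu' => ?_
  simp only [nodesWithin, mem_filter, mem_Icc] at hu hu'
  have := spanStart_lt (R := R) (s := u) (by omega)
  have := self_le_spanEnd (R := R) u
  omega

theorem self_notMem_nodesWithin_left (hs : 0 < s) : s ∉ nodesWithin R n x (s - 1) := by
  have := self_le_spanEnd (R := R) s
  simp only [nodesWithin, mem_filter]
  omega

theorem self_notMem_nodesWithin_right (hs : 0 < s) : s ∉ nodesWithin R n s y := by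
  have := spanStart_lt (R := R) hs
  simp only [nodesWithin, mem_filter]
  omega

variable (R) in
/-- Sorting the nodes by this key lists them in post-order: children come before parents. -/
def postKey (s : ℕ) : ℕ ×ₗ ℕᵒᵈ := toLex (spanEnd R s, OrderDual.toDual s)

theorem postKey_injective : Function.Injective (postKey R) := fun _ _ h => by
  simpa [postKey] using congrArg (fun k => OrderDual.ofDual (ofLex k).2) h

theorem postKey_lt_iff {t : ℕ} :
    postKey R t < postKey R s ↔ spanEnd R t < spanEnd R s ∨ spanEnd R t = spanEnd R s ∧ s < t := by
  simp [postKey, Prod.Lex.toLex_lt_toLex]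

end SplitTree

/-- A factorization of a string over `alphabet` into `factors`, in which factor `k` is meant to be
a copy of the run of factors `I k, …, J k` whenever it has more than one letter. -/
structure RefParsing (β : Type*) where
  alphabet : List β
  factors : List (List β)
  I : ℕ → ℕ
  J : ℕ → ℕ

namespace RefParsing

open SplitTree

section
variable {β : Type*} (P : RefParsing β)

def factor (k : ℕ) : List β := P.factors.getD k []

def last : ℕ := P.factors.length - 1

def refs : Finset (ℕ × ℕ) :=
  {k ∈ range P.factors.length | 1 < (P.factor k).length}.image fun k => (P.I k, P.J k)

structure IsValid : Prop where
  length_pos : 0 < P.factors.length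
  factor_ne_nil : ∀ k < P.factors.length, P.factor k ≠ []
  factor_subset : ∀ k < P.factors.length, P.factor k ⊆ P.alphabet
  lt_of_long : ∀ k < P.factors.length, 1 < (P.factor k).length → P.I k < P.J k ∧ P.J k < k
  factor_eq_of_long : ∀ k < P.factors.length, 1 < (P.factor k).length →
    P.factor k = (P.factors.slice (P.I k) (P.J k)).flatten
  not_crossing : ∀ k < P.factors.length, ∀ l < P.factors.length,
    1 < (P.factor k).length → 1 < (P.factor l).length →
    P.I k < P.I l → P.I l ≤ P.J k → P.J l ≤ P.J k

variable {P} {k : ℕ}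

theorem mem_refs {p : ℕ × ℕ} :
    p ∈ P.refs ↔ ∃ k < P.factors.length, 1 < (P.factor k).length ∧ (P.I k, P.J k) = p := by
  simp [refs, and_assoc]

theorem mk_mem_refs (hk : k < P.factors.length) (hlong : 1 < (P.factor k).length) :
    (P.I k, P.J k) ∈ P.refs :=
  mem_refs.2 ⟨k, hk, hlong, rfl⟩

theorem IsValid.isLaminar (h : P.IsValid) : IsLaminar P.refs P.last where
  fst_lt_snd p hp := by
    obtain ⟨k, hk, hlong, rfl⟩ := mem_refs.1 hp
    exact (h.lt_of_long k hk hlong).1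
  snd_le p hp := by
    obtain ⟨k, hk, hlong, rfl⟩ := mem_refs.1 hp
    have := h.lt_of_long k hk hlong
    simp only [last]
    omega
  not_crossing p hp q hq := by
    obtain ⟨k, hk, hlong, rfl⟩ := mem_refs.1 hp
    obtain ⟨l, hl, hlong', rfl⟩ := mem_refs.1 hq
    exact h.not_crossing k hk l hl hlong hlong'

theorem IsValid.lt_length (h : P.IsValid) (hk : k ≤ P.last) : k < P.factors.length := by
  have := h.length_pos
  simp only [last] at hk
  omega

theorem IsValid.alphabet_ne_nil (h : P.IsValid) : P.alphabet ≠ [] := by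
  obtain ⟨c, hc⟩ := List.exists_mem_of_ne_nil _ (h.factor_ne_nil 0 h.length_pos)
  exact List.ne_nil_of_mem (h.factor_subset 0 h.length_pos hc)

variable (P) in
def numNonterminals : ℕ := P.alphabet.length + P.last

variable (P) in
/-- Nonterminal `i < alphabet.length` derives `alphabet[i]`; the internal nodes follow, in
post-order. -/
def nodeIdx (s : ℕ) : ℕ := P.alphabet.length + rank (Icc 1 P.last) (postKey P.refs) s

theorem alphabet_length_le_nodeIdx (s : ℕ) : P.alphabet.length ≤ P.nodeIdx s :=
  Nat.le_add_right _ _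

theorem nodeIdx_lt_nodeIdx {s t : ℕ} (ht : t ∈ Icc 1 P.last)
    (h : postKey P.refs t < postKey P.refs s) : P.nodeIdx t < P.nodeIdx s :=
  Nat.add_lt_add_left (rank_lt_rank ht h) _

theorem nodeIdx_bijOn :
    Set.BijOn P.nodeIdx (Icc 1 P.last) (Set.Ico P.alphabet.length P.numNonterminals) := by
  obtain ⟨hmaps, hinj, hsurj⟩ := rank_bijOn (S := Icc 1 P.last) postKey_injective.injOn
  rw [Nat.card_Icc, Nat.add_sub_cancel] at hmaps hsurj
  refine ⟨fun s hs => ?_, fun s hs t ht hst => hinj hs ht (Nat.add_left_cancel hst), fun i hi => ?_⟩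
  · have := hmaps hs
    simp only [Set.mem_Iio] at this
    simp only [nodeIdx, numNonterminals, Set.mem_Ico]
    omega
  · simp only [numNonterminals, Set.mem_Ico] at hi
    obtain ⟨s, hs, he⟩ := hsurj (show i - P.alphabet.length ∈ Set.Iio P.last by simp; omega)
    exact ⟨s, hs, by simp only [nodeIdx, he]; omega⟩

theorem nodeIdx_lt_numNonterminals {s : ℕ} (hs : s ∈ Icc 1 P.last) :
    P.nodeIdx s < P.numNonterminals :=
  (nodeIdx_bijOn.mapsTo hs).2

theorem IsValid.numNonterminals_pos (h : P.IsValid) : 0 < P.numNonterminals :=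
  Nat.add_pos_left (List.length_pos_iff.2 h.alphabet_ne_nil) _

def toFin (h : P.IsValid) (i : ℕ) : Fin P.numNonterminals :=
  ⟨i % P.numNonterminals, Nat.mod_lt _ h.numNonterminals_pos⟩

theorem toFin_val (h : P.IsValid) {i : ℕ} (hi : i < P.numNonterminals) : (toFin h i : ℕ) = i :=
  Nat.mod_eq_of_lt hi

theorem toFin_nodeIdx_injOn (h : P.IsValid) :
    Set.InjOn (fun s => toFin h (P.nodeIdx s)) (Icc 1 P.last) := fun s hs t ht hst =>
  nodeIdx_bijOn.injOn hs ht <| by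
    simpa [toFin_val h (nodeIdx_lt_numNonterminals hs),
      toFin_val h (nodeIdx_lt_numNonterminals ht)] using congrArg Fin.val hst

def nodeSet (h : P.IsValid) (x y : ℕ) : Finset (Fin P.numNonterminals) :=
  (nodesWithin P.refs P.last x y).image fun s => toFin h (P.nodeIdx s)

theorem toFin_nodeIdx_mem_nodeSet (h : P.IsValid) {s x y : ℕ} (hs : s ∈ Icc 1 P.last) :
    toFin h (P.nodeIdx s) ∈ nodeSet h x y ↔ s ∈ nodesWithin P.refs P.last x y := by
  refine ⟨fun hm => ?_, mem_image_of_mem _⟩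
  obtain ⟨u, hu, he⟩ := mem_image.1 hm
  exact toFin_nodeIdx_injOn h (filter_subset _ _ hu) hs he ▸ hu

theorem disjoint_nodeSet (h : P.IsValid) {x y x' y' : ℕ} (hy : y < x') :
    Disjoint (nodeSet h x y) (nodeSet h x' y') := by
  refine disjoint_left.2 fun _ hm hm' => ?_
  obtain ⟨u, hu, rfl⟩ := mem_image.1 hm
  exact disjoint_left.1 (disjoint_nodesWithin hy) hu
    ((toFin_nodeIdx_mem_nodeSet h (filter_subset _ _ hu)).1 hm')

theorem nodeSet_eq_insert_union (h : P.IsValid) {t : ℕ} (ht : t ∈ Icc 1 P.last) :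
    nodeSet h (spanStart P.refs t) (spanEnd P.refs t) = insert (toFin h (P.nodeIdx t))
      (nodeSet h (spanStart P.refs t) (t - 1) ∪ nodeSet h t (spanEnd P.refs t)) := by
  simp only [nodeSet, nodesWithin_eq_insert_union ht, image_insert, image_union]

variable (P) in
noncomputable def splitOf (i : ℕ) : ℕ := Function.invFunOn P.nodeIdx (Icc 1 P.last) i

theorem splitOf_nodeIdx {s : ℕ} (hs : s ∈ Icc 1 P.last) : P.splitOf (P.nodeIdx s) = s :=
  nodeIdx_bijOn.injOn.leftInvOn_invFunOn hs

theorem splitOf_mem {i : ℕ} (hi : P.alphabet.length ≤ i) (hi' : i < P.numNonterminals) :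
    P.splitOf i ∈ Icc 1 P.last ∧ P.nodeIdx (P.splitOf i) = i :=
  have h := nodeIdx_bijOn.surjOn ⟨hi, hi'⟩
  ⟨Function.invFunOn_mem h, Function.invFunOn_eq h⟩

variable (P) in
noncomputable def yield (i : ℕ) : List β :=
  if hi : i < P.alphabet.length then [P.alphabet[i]] else
    (P.factors.slice (spanStart P.refs (P.splitOf i)) (spanEnd P.refs (P.splitOf i))).flatten

theorem yield_nodeIdx {s : ℕ} (hs : s ∈ Icc 1 P.last) :
    P.yield (P.nodeIdx s) = (P.factors.slice (spanStart P.refs s) (spanEnd P.refs s)).flatten := by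
  rw [yield, dif_neg (alphabet_length_le_nodeIdx s).not_gt, splitOf_nodeIdx hs]

theorem IsValid.exists_eq_singleton (h : P.IsValid) (hk : k < P.factors.length)
    (hshort : ¬ 1 < (P.factor k).length) : ∃ c, P.factor k = [c] := by
  have := h.factor_ne_nil k hk
  match hf : P.factor k, hshort with
  | [], _ => exact absurd hf this
  | [c], _ => exact ⟨c, rfl⟩
  | _ :: _ :: _, hs => simp at hs

theorem IsValid.span_topSplit_ref (h : P.IsValid) (hk : k < P.factors.length)
    (hlong : 1 < (P.factor k).length) :
    topSplit P.refs (P.I k) (P.J k) ∈ Icc 1 P.last ∧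
      spanStart P.refs (topSplit P.refs (P.I k) (P.J k)) = P.I k ∧
      spanEnd P.refs (topSplit P.refs (P.I k) (P.J k)) = P.J k :=
  (isBlock_of_mem h.isLaminar (mk_mem_refs hk hlong)).node (h.lt_of_long k hk hlong).1.ne

/-- A long factor in the right subtree of `t` referring to the left of that subtree refers into
the left subtree. -/
theorem IsValid.topSplit_ref_mem_nodesWithin (h : P.IsValid) {t : ℕ}
    (hk : k < P.factors.length) (hlong : 1 < (P.factor k).length) (htk : t ≤ k)
    (hkt : k ≤ spanEnd P.refs t) (hI : spanStart P.refs t ≤ P.I k) (hIt : P.I k < t) :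
    topSplit P.refs (P.I k) (P.J k) ∈ nodesWithin P.refs P.last (spanStart P.refs t) (t - 1) := by
  obtain ⟨hr, hrI, hrJ⟩ := h.span_topSplit_ref hk hlong
  have := snd_lt_of_fst_lt h.isLaminar (mk_mem_refs hk hlong) hIt htk hkt (h.lt_of_long k hk hlong).2
  simp only at this
  exact mem_filter.2 ⟨hr, by omega, by omega⟩

end

section
variable {β : Type*} [DecidableEq β] (P : RefParsing β)

def leafIdx (k : ℕ) : ℕ :=
  match P.factor k with
  | [c] => P.alphabet.idxOf c
  | _ => P.nodeIdx (topSplit P.refs (P.I k) (P.J k))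

def spanIdx (x y : ℕ) : ℕ := if x = y then P.leafIdx x else P.nodeIdx (topSplit P.refs x y)

noncomputable def natRule (i : ℕ) : β ⊕ (ℕ × ℕ) :=
  if hi : i < P.alphabet.length then .inl P.alphabet[i]
  else
    let s := P.splitOf i
    .inr (P.spanIdx (spanStart P.refs s) (s - 1), P.spanIdx s (spanEnd P.refs s))

variable {P} {k s x y : ℕ}

theorem leafIdx_of_eq_singleton {c : β} (hk : P.factor k = [c]) :
    P.leafIdx k = P.alphabet.idxOf c := by
  simp [leafIdx, hk]

theorem leafIdx_of_long (hlong : 1 < (P.factor k).length) :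
    P.leafIdx k = P.nodeIdx (topSplit P.refs (P.I k) (P.J k)) := by
  unfold leafIdx
  split
  · simp_all
  · rfl

theorem IsValid.idxOf_lt_length (h : P.IsValid) (hk : k < P.factors.length) {c : β}
    (hc : P.factor k = [c]) : P.alphabet.idxOf c < P.alphabet.length :=
  List.idxOf_lt_length_of_mem (h.factor_subset k hk (hc ▸ List.mem_singleton_self c))

theorem IsValid.leafIdx_lt_nodeIdx (h : P.IsValid) (hk : k < P.factors.length)
    (hks : k ≤ spanEnd P.refs s) : P.leafIdx k < P.nodeIdx s := by
  by_cases hlong : 1 < (P.factor k).length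
  · obtain ⟨hr, -, hrJ⟩ := h.span_topSplit_ref hk hlong
    rw [leafIdx_of_long hlong]
    refine nodeIdx_lt_nodeIdx hr (postKey_lt_iff.2 (.inl ?_))
    have := (h.lt_of_long k hk hlong).2
    omega
  · obtain ⟨c, hc⟩ := h.exists_eq_singleton hk hlong
    rw [leafIdx_of_eq_singleton hc]
    exact (h.idxOf_lt_length hk hc).trans_le (alphabet_length_le_nodeIdx s)

theorem IsValid.leafIdx_lt (h : P.IsValid) (hk : k < P.factors.length) :
    P.leafIdx k < P.numNonterminals := by
  by_cases hlong : 1 < (P.factor k).length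
  · rw [leafIdx_of_long hlong]
    exact nodeIdx_lt_numNonterminals (h.span_topSplit_ref hk hlong).1
  · obtain ⟨c, hc⟩ := h.exists_eq_singleton hk hlong
    rw [leafIdx_of_eq_singleton hc]
    exact (h.idxOf_lt_length hk hc).trans_le (Nat.le_add_right _ _)

theorem IsValid.spanIdx_lt (h : P.IsValid) (hb : IsBlock P.refs P.last x y) :
    P.spanIdx x y < P.numNonterminals := by
  unfold spanIdx
  split_ifs with hxy
  · exact h.leafIdx_lt (h.lt_length (hxy ▸ hb.le.2))
  · exact nodeIdx_lt_numNonterminals (hb.node hxy).1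

/-- Both children of node `s` have smaller indices. -/
theorem IsValid.spanIdx_lt_nodeIdx (h : P.IsValid) (hb : IsBlock P.refs P.last x y)
    (hy : y < spanEnd P.refs s ∨ x = s ∧ y = spanEnd P.refs s) : P.spanIdx x y < P.nodeIdx s := by
  unfold spanIdx
  split_ifs with hxy
  · exact h.leafIdx_lt_nodeIdx (h.lt_length (hxy ▸ hb.le.2)) (by omega)
  · obtain ⟨ht, hx, hy'⟩ := hb.node hxy
    refine nodeIdx_lt_nodeIdx ht (postKey_lt_iff.2 ?_)
    rw [hy']
    rcases hy with hy | ⟨rfl, rfl⟩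
    · exact .inl hy
    · have := spanStart_lt (R := P.refs) (mem_Icc.1 ht).1
      exact .inr ⟨rfl, by omega⟩

theorem IsValid.natRule_lt (h : P.IsValid) {i j k : ℕ} (hi : i < P.numNonterminals)
    (hr : P.natRule i = .inr (j, k)) : j < i ∧ k < i := by
  unfold natRule at hr
  split_ifs at hr with hA
  obtain ⟨rfl, rfl⟩ := Prod.mk.inj (Sum.inr.inj hr)
  obtain ⟨hs, hsi⟩ := splitOf_mem (not_lt.1 hA) hi
  generalize P.splitOf i = s at hs hsi ⊢
  subst hsi
  have hR := h.isLaminar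
  have := spanStart_lt (R := P.refs) (mem_Icc.1 hs).1
  have := self_le_spanEnd (R := P.refs) s
  exact ⟨h.spanIdx_lt_nodeIdx (isBlock_left hR hs) (.inl (by omega)),
    h.spanIdx_lt_nodeIdx (isBlock_right hR (mem_Icc.1 hs).2) (.inr ⟨rfl, rfl⟩)⟩


/-- An `abbrev`, so that `Fin (toSLP h).g` is reducibly `Fin P.numNonterminals`. -/
noncomputable abbrev toSLP (h : P.IsValid) : SLP β where
  g := P.numNonterminals
  start := toFin h (P.spanIdx 0 P.last)
  rule i := (P.natRule i).map id (Prod.map (toFin h) (toFin h))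
  wf i j k hr := by
    rcases hn : P.natRule i with c | ⟨j', k'⟩ <;> simp only [hn, Sum.map_inl, Sum.map_inr,
      reduceCtorEq, Sum.inr.injEq, Prod.map, Prod.mk.injEq] at hr
    obtain ⟨rfl, rfl⟩ := hr
    obtain ⟨hj, hk⟩ := h.natRule_lt i.2 hn
    simp only [Fin.lt_def, toFin_val h (hj.trans i.2), toFin_val h (hk.trans i.2)]
    exact ⟨hj, hk⟩

theorem rule_toSLP_of_lt (h : P.IsValid) {i : Fin (toSLP h).g} (hi : (i : ℕ) < P.alphabet.length) :
    (toSLP h).rule i = .inl P.alphabet[(i : ℕ)] := by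
  simp [toSLP, natRule, hi]

theorem rule_toSLP_of_le (h : P.IsValid) {i : Fin (toSLP h).g} (hi : P.alphabet.length ≤ i) :
    (toSLP h).rule i =
      .inr (toFin h (P.spanIdx (spanStart P.refs (P.splitOf i)) (P.splitOf i - 1)),
        toFin h (P.spanIdx (P.splitOf i) (spanEnd P.refs (P.splitOf i)))) := by
  simp [toSLP, natRule, not_lt.2 hi]

theorem rule_toSLP_nodeIdx (h : P.IsValid) (hs : s ∈ Icc 1 P.last) :
    (toSLP h).rule (toFin h (P.nodeIdx s)) =
      .inr (toFin h (P.spanIdx (spanStart P.refs s) (s - 1)),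
        toFin h (P.spanIdx s (spanEnd P.refs s))) := by
  have hi := toFin_val h (nodeIdx_lt_numNonterminals hs)
  rw [rule_toSLP_of_le h (by rw [hi]; exact alphabet_length_le_nodeIdx s), hi, splitOf_nodeIdx hs]

theorem IsValid.yield_spanIdx (h : P.IsValid) (hb : IsBlock P.refs P.last x y) :
    P.yield (P.spanIdx x y) = (P.factors.slice x y).flatten := by
  unfold spanIdx
  split_ifs with hxy
  · subst hxy
    have hx := h.lt_length hb.le.2
    rw [List.slice_self _ [] hx, List.flatten_singleton]
    by_cases hlong : 1 < (P.factor x).length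
    · obtain ⟨hr, hI, hJ⟩ := h.span_topSplit_ref hx hlong
      rw [leafIdx_of_long hlong, yield_nodeIdx hr, hI, hJ]
      exact (h.factor_eq_of_long x hx hlong).symm
    · obtain ⟨c, hc⟩ := h.exists_eq_singleton hx hlong
      rw [leafIdx_of_eq_singleton hc, yield, dif_pos (h.idxOf_lt_length hx hc), List.getElem_idxOf]
      exact hc.symm
  · obtain ⟨ht, hx, hy⟩ := hb.node hxy
    rw [yield_nodeIdx ht, hx, hy]

theorem IsValid.expand_toSLP (h : P.IsValid) (i : Fin (toSLP h).g) :
    (toSLP h).expand i = P.yield i := by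
  refine SLP.expand_eq_of_rule _ (fun i => P.yield i) (fun i c hr => ?_) (fun i j k hr => ?_) i
  · by_cases hi : (i : ℕ) < P.alphabet.length
    · rw [rule_toSLP_of_lt h hi, Sum.inl.injEq] at hr
      rw [yield, dif_pos hi, hr]
    · rw [rule_toSLP_of_le h (not_lt.1 hi)] at hr
      cases hr
  · by_cases hi : (i : ℕ) < P.alphabet.length
    · rw [rule_toSLP_of_lt h hi] at hr
      cases hr
    obtain ⟨hs, hsi⟩ := splitOf_mem (not_lt.1 hi) i.2
    rw [rule_toSLP_of_le h (not_lt.1 hi), Sum.inr.injEq, Prod.mk.injEq] at hr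
    obtain ⟨rfl, rfl⟩ := hr
    have hR := h.isLaminar
    have := spanStart_lt (R := P.refs) (mem_Icc.1 hs).1
    have := self_le_spanEnd (R := P.refs) (P.splitOf i)
    rw [yield, dif_neg hi, toFin_val h (h.spanIdx_lt (isBlock_left hR hs)),
      toFin_val h (h.spanIdx_lt (isBlock_right hR (mem_Icc.1 hs).2)),
      h.yield_spanIdx (isBlock_left hR hs), h.yield_spanIdx (isBlock_right hR (mem_Icc.1 hs).2),
      ← List.flatten_append, List.slice_append_slice _ (by omega) (by omega)]

theorem IsValid.expand_toSLP_spanIdx (h : P.IsValid) (hb : IsBlock P.refs P.last x y) :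
    (toSLP h).expand (toFin h (P.spanIdx x y)) = (P.factors.slice x y).flatten := by
  rw [h.expand_toSLP, toFin_val h (h.spanIdx_lt hb), h.yield_spanIdx hb]

theorem IsValid.expand_toSLP_leafIdx (h : P.IsValid) (hk : k < P.factors.length) :
    (toSLP h).expand (toFin h (P.leafIdx k)) = P.factor k := by
  have := h.expand_toSLP_spanIdx (x := k) ⟨by simp only [last]; omega, .inl rfl⟩
  rwa [spanIdx, if_pos rfl, List.slice_self _ [] hk, List.flatten_singleton] at this

theorem IsValid.visit_toSLP_leafIdx (h : P.IsValid) (hk : k < P.factors.length)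
    (S : Finset (Fin P.numNonterminals))
    (hS : 1 < (P.factor k).length → toFin h (P.nodeIdx (topSplit P.refs (P.I k) (P.J k))) ∈ S) :
    (toSLP h).visit (toFin h (P.leafIdx k)) S = ([P.factor k], S) := by
  rw [← h.expand_toSLP_leafIdx hk]
  by_cases hlong : 1 < (P.factor k).length
  · rw [leafIdx_of_long hlong]
    exact SLP.visit_of_mem _ (rule_toSLP_nodeIdx h (h.span_topSplit_ref hk hlong).1) (hS hlong)
  · obtain ⟨c, hc⟩ := h.exists_eq_singleton hk hlong
    have hcA := h.idxOf_lt_length hk hc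
    rw [leafIdx_of_eq_singleton hc]
    refine SLP.visit_of_rule_inl _ (rule_toSLP_of_lt h ?_) S
    rwa [toFin_val h (hcA.trans_le (Nat.le_add_right _ _))]

theorem IsValid.visit_toSLP_spanIdx (h : P.IsValid) (hb : IsBlock P.refs P.last x y)
    (S : Finset (Fin P.numNonterminals)) (hfresh : Disjoint S (nodeSet h x y))
    (hrefs : ∀ k, x ≤ k → k ≤ y → 1 < (P.factor k).length → P.I k < x →
      toFin h (P.nodeIdx (topSplit P.refs (P.I k) (P.J k))) ∈ S) :
    (toSLP h).visit (toFin h (P.spanIdx x y)) S = (P.factors.slice x y, S ∪ nodeSet h x y) := by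
  induction hd : y - x using Nat.strong_induction_on generalizing x y S with
  | _ d ih =>
  have hR := h.isLaminar
  rcases eq_or_ne x y with rfl | hxy
  · have hx := h.lt_length hb.le.2
    rw [spanIdx, if_pos rfl, nodeSet, nodesWithin_self, image_empty, union_empty,
      List.slice_self _ [] hx]
    refine h.visit_toSLP_leafIdx hx S fun hlong => hrefs x le_rfl le_rfl hlong ?_
    have := h.lt_of_long x hx hlong
    omega
  obtain ⟨ht, hx, hy⟩ := hb.node hxy
  set t := topSplit P.refs x y
  have ht₀ : 0 < t := (mem_Icc.1 ht).1
  have hxt : x < t := hx ▸ spanStart_lt ht₀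
  have hty : t ≤ y := hy ▸ self_le_spanEnd t
  have hsplit := nodeSet_eq_insert_union h ht
  rw [hx, hy] at hsplit
  have htL : toFin h (P.nodeIdx t) ∉ nodeSet h x (t - 1) := by
    rw [toFin_nodeIdx_mem_nodeSet h ht]; exact self_notMem_nodesWithin_left ht₀
  have htR : toFin h (P.nodeIdx t) ∉ nodeSet h t y := by
    rw [toFin_nodeIdx_mem_nodeSet h ht]; exact self_notMem_nodesWithin_right ht₀
  rw [hsplit, disjoint_insert_right, disjoint_union_right] at hfresh
  obtain ⟨htS, hSL, hSR⟩ := hfresh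
  have hleft := ih (t - 1 - x) (by omega) (hx ▸ isBlock_left hR ht)
    (insert (toFin h (P.nodeIdx t)) S) (disjoint_insert_left.2 ⟨htL, hSL⟩)
    (fun k hk₁ hk₂ hlong hk₃ => mem_insert_of_mem (hrefs k hk₁ (by omega) hlong hk₃)) rfl
  have hright := ih (y - t) (by omega) (hy ▸ isBlock_right hR (mem_Icc.1 ht).2)
    (insert (toFin h (P.nodeIdx t)) S ∪ nodeSet h x (t - 1))
    (disjoint_union_left.2 ⟨disjoint_insert_left.2 ⟨htR, hSR⟩, disjoint_nodeSet h (by omega)⟩)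
    (fun k hk₁ hk₂ hlong hk₃ => ?_) rfl
  · rw [spanIdx, if_neg hxy, SLP.visit_of_notMem _ (rule_toSLP_nodeIdx h ht) htS, hx, hy]
    simp only
    rw [hleft, hright, List.slice_append_slice _ hxt (by omega), hsplit]
    rw [insert_union, insert_union, union_insert, union_assoc]
  · have hk : k < P.factors.length := h.lt_length (by have := hb.le.2; omega)
    by_cases hkx : P.I k < x
    · exact mem_union_left _ (mem_insert_of_mem (hrefs k (by omega) hk₂ hlong hkx))
    · refine mem_union_right _ ((toFin_nodeIdx_mem_nodeSet h (h.span_topSplit_ref hk hlong).1).2 ?_)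
      exact hx ▸ h.topSplit_ref_mem_nodesWithin hk hlong hk₁ (hy ▸ hk₂) (by omega) hk₃

theorem IsValid.produces_toSLP (h : P.IsValid) : (toSLP h).Produces P.factors.flatten := by
  rw [SLP.Produces, h.expand_toSLP_spanIdx (isBlock_root h.isLaminar), last,
    List.slice_zero_length_sub_one]

theorem IsValid.grammarParsing_toSLP (h : P.IsValid) : (toSLP h).grammarParsing = P.factors := by
  rw [SLP.grammarParsing, h.visit_toSLP_spanIdx (isBlock_root h.isLaminar) ∅
    (disjoint_empty_left _) (fun _ _ _ _ hk => absurd hk (Nat.not_lt_zero _)), last,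
    List.slice_zero_length_sub_one]

end

end RefParsing
/-- Lemma 2, backward direction: let `T` be a (nonempty) string with `σ = T.toFinset.card`
distinct symbols, and let `F = F_1 ⋯ F_m` be a factorization of `T` into nonempty factors
such that each factor `F_k` of length `> 1` comes with an index interval `[I k .. J k]`,
`I k < J k < k`, with `F_k = F_{I k} ⋯ F_{J k}`, and any two such intervals are disjoint or
nested. Then there is an SLP of size `m + σ - 1` producing `T` whose grammar parsing is
exactly `F`. (Indices of factors are 0-based here.) -/
theorem SLP.exists_of_parsing (T : List α) (hTne : T ≠ []) (F : List (List α))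
    (hflat : F.flatten = T) (hne : ∀ f ∈ F, f ≠ [])
    (I J : ℕ → ℕ)
    (h₁ : ∀ k : Fin F.length, 1 < (F.get k).length →
      I k < J k ∧ J k < k ∧ F.get k = ((F.take (J k + 1)).drop (I k)).flatten)
    (h₂ : ∀ x y : Fin F.length, 1 < (F.get x).length → 1 < (F.get y).length →
      (J x < I y ∨ J y < I x) ∨ (I x ≤ I y ∧ J y ≤ J x) ∨ (I y ≤ I x ∧ J x ≤ J y)) :
    ∃ G : SLP α, G.Produces T ∧ G.size = F.length + T.toFinset.card - 1 ∧
      G.grammarParsing = F := by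
  have hF : 0 < F.length := List.length_pos_iff.2 (by rintro rfl; exact hTne hflat.symm)
  have hget (k : ℕ) (hk : k < F.length) : F.getD k [] = F.get ⟨k, hk⟩ :=
    List.getD_eq_getElem _ _ hk
  have hP : RefParsing.IsValid ⟨T.dedup, F, I, J⟩ := by
    refine ⟨hF, fun k hk => ?_, fun k hk => ?_, fun k hk hl => ?_, fun k hk hl => ?_,
      fun k hk l hl hlk hll => ?_⟩ <;> dsimp only [RefParsing.factor] at * <;> rw [hget k hk] at *
    · exact hne _ (List.get_mem F _)
    · exact fun c hc => List.mem_dedup.2 (hflat ▸ List.mem_flatten.2 ⟨_, List.get_mem F _, hc⟩)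
    · exact ⟨(h₁ _ hl).1, (h₁ _ hl).2.1⟩
    · exact (h₁ _ hl).2.2
    · rw [hget l hl] at hll
      have := h₂ _ _ hlk hll
      simp only at this
      omega
  refine ⟨RefParsing.toSLP hP, hflat ▸ hP.produces_toSLP, ?_, hP.grammarParsing_toSLP⟩
  simp only [SLP.size, RefParsing.numNonterminals, RefParsing.last, List.card_toFinset]
  omega
end

section
/- For any string T over an alphabet with σ distinct symbols occurring in T and any straight-line program G producing T, the size of G equals the number of factors of the grammar parsing of T with respect to G plus σ − 1. Consequently, an SLP for T has minimum size among all SLPs producing T if and only if its grammar parsing has the minimum number of factors. -/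
namespace SLP

variable {α : Type*}

theorem expand_inl (G : SLP α) (i : Fin G.g) (c : α) (h : G.rule i = Sum.inl c) :
    G.expand i = [c] := by
  rw [expand]; split <;> simp_all

theorem expand_inr (G : SLP α) (i j k : Fin G.g) (h : G.rule i = Sum.inr (j, k)) :
    G.expand i = G.expand j ++ G.expand k := by
  rw [expand]; split <;> simp_all

theorem visit_inl (G : SLP α) (i : Fin G.g) (c : α) (seen : Finset (Fin G.g))
    (h : G.rule i = Sum.inl c) : G.visit i seen = ([G.expand i], seen) := by
  rw [visit]; split <;> simp_all

theorem visit_inr_mem (G : SLP α) (i j k : Fin G.g) (seen : Finset (Fin G.g))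
    (h : G.rule i = Sum.inr (j, k)) (hm : i ∈ seen) :
    G.visit i seen = ([G.expand i], seen) := by
  rw [visit]; split <;> simp_all

theorem visit_inr_notMem (G : SLP α) (i j k : Fin G.g) (seen : Finset (Fin G.g))
    (h : G.rule i = Sum.inr (j, k)) (hm : i ∉ seen) :
    G.visit i seen = ((G.visit j (insert i seen)).1 ++ (G.visit k (G.visit j (insert i seen)).2).1,
      (G.visit k (G.visit j (insert i seen)).2).2) := by
  rw [visit]; split <;> simp_all

theorem expand_ne_nil (G : SLP α) (i : Fin G.g) : G.expand i ≠ [] := by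
  rcases h : G.rule i with c | ⟨j, k⟩
  · rw [G.expand_inl i c h]; simp
  · rw [G.expand_inr i j k h]
    have hj := G.expand_ne_nil j
    simp [hj]
termination_by i.val
decreasing_by exact (G.wf i j k h).1

theorem exists_inl_of_mem_expand (G : SLP α) (i : Fin G.g) (a : α) (ha : a ∈ G.expand i) :
    ∃ m : Fin G.g, G.rule m = Sum.inl a := by
  rcases h : G.rule i with c | ⟨j, k⟩
  · rw [G.expand_inl i c h] at ha
    simp at ha
    exact ⟨i, ha ▸ h⟩
  · rw [G.expand_inr i j k h] at ha
    rcases List.mem_append.1 ha with h1 | h1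
    · exact G.exists_inl_of_mem_expand j a h1
    · exact G.exists_inl_of_mem_expand k a h1
termination_by i.val
decreasing_by
  · exact (G.wf i j k h).1
  · exact (G.wf i j k h).2

theorem mem_expand_of_reachable (G : SLP α) {i : Fin G.g} (h : G.Reachable i) :
    ∀ a ∈ G.expand i, a ∈ G.expand G.start := by
  induction h with
  | start => exact fun a ha => ha
  | left hr hrule ih =>
    intro a ha
    exact ih a (by rw [G.expand_inr _ _ _ hrule]; exact List.mem_append_left _ ha)
  | right hr hrule ih =>
    intro a ha
    exact ih a (by rw [G.expand_inr _ _ _ hrule]; exact List.mem_append_right _ ha)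

/-- Reachability from `i` avoiding the set `s`. -/
inductive RA (G : SLP α) (s : Finset (Fin G.g)) : Fin G.g → Fin G.g → Prop
  | refl {i} : i ∉ s → RA G s i i
  | left {i j k m} : i ∉ s → G.rule i = Sum.inr (j, k) → RA G s j m → RA G s i m
  | right {i j k m} : i ∉ s → G.rule i = Sum.inr (j, k) → RA G s k m → RA G s i m

theorem ra_notMem_start {G : SLP α} {s : Finset (Fin G.g)} {i m : Fin G.g}
    (h : G.RA s i m) : i ∉ s := by
  cases h <;> assumption

theorem ra_mono {G : SLP α} {s s' : Finset (Fin G.g)} {i m : Fin G.g}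
    (hs : s' ⊆ s) (h : G.RA s i m) : G.RA s' i m := by
  induction h with
  | refl hi => exact RA.refl (fun hx => hi (hs hx))
  | left hi hrule _ ih => exact RA.left (fun hx => hi (hs hx)) hrule ih
  | right hi hrule _ ih => exact RA.right (fun hx => hi (hs hx)) hrule ih

theorem ra_trans {G : SLP α} {s : Finset (Fin G.g)} {i q m : Fin G.g}
    (h1 : G.RA s i q) (h2 : G.RA s q m) : G.RA s i m := by
  induction h1 with
  | refl hi => exact h2
  | left hi hrule _ ih => exact RA.left hi hrule (ih h2)
  | right hi hrule _ ih => exact RA.right hi hrule (ih h2)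

theorem ra_strengthen {G : SLP α} {s s' : Finset (Fin G.g)} {i m : Fin G.g}
    (h : G.RA s i m) (hc : ∀ x ∈ s', x ∈ s ∨ i < x) : G.RA s' i m := by
  induction h with
  | @refl i hi =>
    refine RA.refl fun hx => ?_
    rcases hc i hx with h1 | h1
    · exact hi h1
    · exact absurd h1 (lt_irrefl i)
  | @left i j k m hi hrule hj ih =>
    have hjlt : j < i := (G.wf i j k hrule).1
    refine RA.left (fun hx => ?_) hrule (ih fun x hx => ?_)
    · rcases hc i hx with h1 | h1
      · exact hi h1
      · exact absurd h1 (lt_irrefl i)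
    · rcases hc x hx with h1 | h1
      · exact Or.inl h1
      · exact Or.inr (hjlt.trans h1)
  | @right i j k m hi hrule hk ih =>
    have hklt : k < i := (G.wf i j k hrule).2
    refine RA.right (fun hx => ?_) hrule (ih fun x hx => ?_)
    · rcases hc i hx with h1 | h1
      · exact hi h1
      · exact absurd h1 (lt_irrefl i)
    · rcases hc x hx with h1 | h1
      · exact Or.inl h1
      · exact Or.inr (hklt.trans h1)

theorem ra_split {G : SLP α} {s s' : Finset (Fin G.g)} {i m : Fin G.g}
    (h : G.RA s i m) (hs : s ⊆ s') :
    G.RA s' i m ∨ ∃ q, q ∈ s' ∧ q ∉ s ∧ G.RA s i q ∧ G.RA s q m := by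
  induction h with
  | @refl i hi =>
    by_cases hi' : i ∈ s'
    · exact Or.inr ⟨i, hi', hi, RA.refl hi, RA.refl hi⟩
    · exact Or.inl (RA.refl hi')
  | @left i j k m hi hrule hj ih =>
    by_cases hi' : i ∈ s'
    · exact Or.inr ⟨i, hi', hi, RA.refl hi, RA.left hi hrule hj⟩
    · rcases ih with h1 | ⟨q, hq1, hq2, hq3, hq4⟩
      · exact Or.inl (RA.left hi' hrule h1)
      · exact Or.inr ⟨q, hq1, hq2, RA.left hi hrule hq3, hq4⟩
  | @right i j k m hi hrule hk ih =>
    by_cases hi' : i ∈ s'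
    · exact Or.inr ⟨i, hi', hi, RA.refl hi, RA.right hi hrule hk⟩
    · rcases ih with h1 | ⟨q, hq1, hq2, hq3, hq4⟩
      · exact Or.inl (RA.right hi' hrule h1)
      · exact Or.inr ⟨q, hq1, hq2, RA.right hi hrule hq3, hq4⟩

theorem visit_spec (G : SLP α) (i : Fin G.g) (seen : Finset (Fin G.g)) :
    (∀ m, m ∈ (G.visit i seen).2 ↔
      m ∈ seen ∨ ((∃ jk, G.rule m = Sum.inr jk) ∧ G.RA seen i m))
    ∧ (G.visit i seen).1.length + seen.card = (G.visit i seen).2.card + 1 := by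
  rcases h : G.rule i with c | ⟨j, k⟩
  · rw [G.visit_inl i c seen h]
    refine ⟨fun m => ⟨Or.inl, ?_⟩, by simp [Nat.add_comm]⟩
    rintro (hm | ⟨⟨jk, hjk⟩, hra⟩)
    · exact hm
    · cases hra with
      | refl => simp_all
      | left h1 h2 h3 => simp_all
      | right h1 h2 h3 => simp_all
  · by_cases hmem : i ∈ seen
    · rw [G.visit_inr_mem i j k seen h hmem]
      refine ⟨fun m => ⟨Or.inl, ?_⟩, by simp [Nat.add_comm]⟩
      rintro (hm | ⟨hbin, hra⟩)
      · exact hm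
      · exact absurd hmem (ra_notMem_start hra)
    · have IHj := G.visit_spec j (insert i seen)
      have IHk := G.visit_spec k (G.visit j (insert i seen)).2
      rw [G.visit_inr_notMem i j k seen h hmem]
      have hsub1 : insert i seen ⊆ (G.visit j (insert i seen)).2 := by
        intro x hx; exact (IHj.1 x).2 (Or.inl hx)
      constructor
      · intro m
        dsimp only
        constructor
        · intro hm
          rcases (IHk.1 m).1 hm with hm1 | ⟨hbin, hra⟩
          · rcases (IHj.1 m).1 hm1 with hm2 | ⟨hbin, hra⟩
            · rcases Finset.mem_insert.1 hm2 with rfl | hm3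
              · exact Or.inr ⟨⟨(j, k), h⟩, RA.refl hmem⟩
              · exact Or.inl hm3
            · exact Or.inr ⟨hbin,
                RA.left hmem h (ra_mono (Finset.subset_insert i seen) hra)⟩
          · have hsub0 : seen ⊆ (G.visit j (insert i seen)).2 :=
              fun x hx => hsub1 (Finset.mem_insert_of_mem hx)
            exact Or.inr ⟨hbin, RA.right hmem h (ra_mono hsub0 hra)⟩
        · intro hm
          rcases hm with hm | ⟨hbin, hra⟩
          · exact (IHk.1 m).2 (Or.inl ((IHj.1 m).2 (Or.inl (Finset.mem_insert_of_mem hm))))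
          · cases hra with
            | refl =>
              exact (IHk.1 i).2 (Or.inl ((IHj.1 i).2 (Or.inl (Finset.mem_insert_self i seen))))
            | @left _ j' k' _ h1 h2 h3 =>
              rw [h] at h2
              obtain ⟨rfl, rfl⟩ : j = j' ∧ k = k' := by simpa using h2
              have hraj : G.RA (insert i seen) j m := by
                refine ra_strengthen h3 fun x hx => ?_
                rcases Finset.mem_insert.1 hx with rfl | hx
                · exact Or.inr (G.wf x j k h).1
                · exact Or.inl hx
              exact (IHk.1 m).2 (Or.inl ((IHj.1 m).2 (Or.inr ⟨hbin, hraj⟩)))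
            | @right _ j' k' _ h1 h2 h3 =>
              rw [h] at h2
              obtain ⟨rfl, rfl⟩ : j = j' ∧ k = k' := by simpa using h2
              have hrak : G.RA (insert i seen) k m := by
                refine ra_strengthen h3 fun x hx => ?_
                rcases Finset.mem_insert.1 hx with rfl | hx
                · exact Or.inr (G.wf x j k h).2
                · exact Or.inl hx
              rcases ra_split hrak hsub1 with h4 | ⟨q, hq1, hq2, hq3, hq4⟩
              · exact (IHk.1 m).2 (Or.inr ⟨hbin, h4⟩)
              · rcases (IHj.1 q).1 hq1 with hq5 | ⟨hbinq, hraq⟩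
                · exact absurd hq5 hq2
                · have : G.RA (insert i seen) j m := ra_trans hraq hq4
                  exact (IHk.1 m).2 (Or.inl ((IHj.1 m).2 (Or.inr ⟨hbin, this⟩)))
      · dsimp only
        have h1 := IHj.2
        have h2 := IHk.2
        have h3 : (insert i seen).card = seen.card + 1 := Finset.card_insert_of_notMem hmem
        simp only [List.length_append]
        omega
termination_by i.val
decreasing_by
  · exact (G.wf i j k h).1
  · exact (G.wf i j k h).2

theorem key (T : List α) (G : SLP α)
    (hT : G.Produces T)
    (hused : ∀ i : Fin G.g, G.Reachable i)
    (hterm : ∀ i j : Fin G.g, ∀ c : α, G.rule i = Sum.inl c → G.rule j = Sum.inl c → i = j)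
    [DecidableEq α] :
    G.size + 1 = G.grammarParsing.length + T.toFinset.card := by
  classical
  have hRA : ∀ m : Fin G.g, G.RA ∅ G.start m := by
    intro m
    have h := hused m
    induction h with
    | start => exact RA.refl (Finset.notMem_empty _)
    | left hr hrule ih =>
      exact ra_trans ih (RA.left (Finset.notMem_empty _) hrule (RA.refl (Finset.notMem_empty _)))
    | right hr hrule ih =>
      exact ra_trans ih (RA.right (Finset.notMem_empty _) hrule (RA.refl (Finset.notMem_empty _)))
  have hvs := G.visit_spec G.start ∅
  set B := Finset.univ.filter (fun m : Fin G.g => ∃ jk, G.rule m = Sum.inr jk) with hB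
  have hsnd : (G.visit G.start ∅).2 = B := by
    ext m
    rw [hvs.1 m]
    simp [hB, hRA m]
  have hlen : G.grammarParsing.length = B.card + 1 := by
    have h2 := hvs.2
    rw [hsnd] at h2
    simpa [grammarParsing] using h2
  have hTne : T ≠ [] := hT ▸ G.expand_ne_nil G.start
  set C := Finset.univ.filter (fun m : Fin G.g => ∃ c, G.rule m = Sum.inl c) with hC
  let f : Fin G.g → α := fun m => Sum.elim id (fun _ => T.head hTne) (G.rule m)
  have hsig : T.toFinset = C.image f := by
    ext a
    simp only [List.mem_toFinset, Finset.mem_image, hC, Finset.mem_filter, Finset.mem_univ,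
      true_and]
    constructor
    · intro ha
      obtain ⟨m, hm⟩ := G.exists_inl_of_mem_expand G.start a (by rw [hT]; exact ha)
      exact ⟨m, ⟨a, hm⟩, by simp [f, hm]⟩
    · rintro ⟨m, ⟨c, hm⟩, rfl⟩
      have hc : c ∈ G.expand G.start :=
        G.mem_expand_of_reachable (hused m) c (by rw [G.expand_inl m c hm]; simp)
      have hcT : c ∈ T := hT ▸ hc
      simpa [f, hm] using hcT
  have hinj : Set.InjOn f ↑C := by
    intro m hm m' hm' hf
    simp only [hC, Finset.coe_filter, Set.mem_setOf_eq, Finset.mem_univ, true_and] at hm hm'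
    obtain ⟨c, hc⟩ := hm
    obtain ⟨c', hc'⟩ := hm'
    have hcc : c = c' := by simpa [f, hc, hc'] using hf
    exact hterm m m' c hc (hcc ▸ hc')
  have hCcard : T.toFinset.card = C.card := by
    rw [hsig, Finset.card_image_of_injOn hinj]
  have hBC : B.card + C.card = G.g := by
    have h4 := Finset.card_filter_add_card_filter_not
      (s := (Finset.univ : Finset (Fin G.g))) (p := fun m => ∃ jk, G.rule m = Sum.inr jk)
    have h5 : Finset.univ.filter (fun m : Fin G.g => ¬ ∃ jk, G.rule m = Sum.inr jk) = C := by
      ext m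
      rcases hr : G.rule m with c | ⟨a, b⟩ <;> simp [hC, hr]
    rw [h5] at h4
    simpa [hB, Finset.card_univ] using h4
  have : G.size = G.g := rfl
  omega

end SLP

variable {α : Type*} [DecidableEq α]

/-- For a string `T` with `σ = T.toFinset.card` distinct symbols and an SLP `G` producing
`T` in which every nonterminal is used and no two nonterminals share the same terminal rule,
the size of `G` equals the number of factors of its grammar parsing plus `σ - 1`.
Consequently `G` has minimum size among all such SLPs producing `T` if and only if its grammar
parsing has the minimum number of factors among them. -/
theorem SLP.size_eq_grammarParsing_length_add (T : List α) (G : SLP α)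
    (hT : G.Produces T)
    (hused : ∀ i : Fin G.g, G.Reachable i)
    (hterm : ∀ i j : Fin G.g, ∀ c : α, G.rule i = Sum.inl c → G.rule j = Sum.inl c → i = j) :
    G.size = G.grammarParsing.length + T.toFinset.card - 1 ∧
    ((∀ G' : SLP α, G'.Produces T → (∀ i : Fin G'.g, G'.Reachable i) →
        (∀ i j : Fin G'.g, ∀ c : α, G'.rule i = Sum.inl c → G'.rule j = Sum.inl c → i = j) →
        G.size ≤ G'.size) ↔
      (∀ G' : SLP α, G'.Produces T → (∀ i : Fin G'.g, G'.Reachable i) →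
        (∀ i j : Fin G'.g, ∀ c : α, G'.rule i = Sum.inl c → G'.rule j = Sum.inl c → i = j) →
        G.grammarParsing.length ≤ G'.grammarParsing.length)) := by
  have h1 := SLP.key T G hT hused hterm
  refine ⟨by omega, ?_⟩
  constructor
  · intro H G' a b c
    have h2 := SLP.key T G' a b c
    have h3 := H G' a b c
    omega
  · intro H G' a b c
    have h2 := SLP.key T G' a b c
    have h3 := H G' a b c
    omega
end
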